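/- Let n ≥ 2 be an integer, T₀ ≥ 0, and t ∈ ℝ with (2T₀+1)/(2n) < t < (T₀+1)/n. Set λ(t) = (T₀−nt)/(1+T₀−nt). Then λ(t) < −1, and there exist z ∈ ℂⁿ with z ≠ 0 and ξ ∈ ℂⁿ with ξ ≠ 0 such that (1+T₀−nt)·Σ_{k,j,i,q=1}^n R_{kj̄iq̄}(z,λ(t))·ξ^k·conj(ξ^j)·ξ^i·conj(ξ^q) is a negative real number. That is, for t in ((2T₀+1)/(2n), (T₀+1)/n), the holomorphic bisectional curvature of the Chern-Ricci flow solution ω(t) is no longer non-negative. -/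

import Mathlib

open Finset ComplexConjugate

/-- `|z|² = Σₘ |zᵐ|²` for `z ∈ ℂⁿ`. -/
noncomputable def zsq {n : ℕ} (z : Fin n → ℂ) : ℝ := ∑ m, Complex.normSq (z m)

/-- The Chern curvature tensor `R_{kj̄iq̄}(z,λ)` of the Hermitian metric `ω_λ`
(Lemma 2.1 of the paper). -/
noncomputable def Rten {n : ℕ} (z : Fin n → ℂ) (lam : ℝ) (k j i q : Fin n) : ℂ :=
  (if i = q then 1 else 0)
      * ((if j = k then ((zsq z : ℝ) : ℂ) else 0) - conj (z k) * z j) / ((zsq z : ℝ) : ℂ) ^ 3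
    + (lam : ℂ) * ((if i = j then ((zsq z : ℝ) : ℂ) else 0) - conj (z i) * z j)
        * ((if k = q then ((zsq z : ℝ) : ℂ) else 0) - conj (z k) * z q) / ((zsq z : ℝ) : ℂ) ^ 4
    + ((lam ^ 2 - 2 * lam : ℝ) : ℂ) * conj (z i) * z q
        * ((if k = j then ((zsq z : ℝ) : ℂ) else 0) - conj (z k) * z j) / ((zsq z : ℝ) : ℂ) ^ 4

/-- For `n ≥ 2`, `T₀ ≥ 0` and `(2T₀+1)/(2n) < t < (T₀+1)/n`, with
`λ(t) = (T₀−nt)/(1+T₀−nt)` one has `λ(t) < −1`, and there exist `z ≠ 0` and `ξ ≠ 0`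
such that `(1+T₀−nt)·Σ R_{kj̄iq̄}(z,λ(t)) ξᵏ ξ̄ʲ ξⁱ ξ̄ᑫ` is a negative real number: on
`((2T₀+1)/(2n), (T₀+1)/n)` the holomorphic bisectional curvature of the Chern-Ricci
flow solution `ω(t)` is no longer non-negative. -/
theorem flow_bisectional_negative (n : ℕ) (hn : 2 ≤ n) (T₀ : ℝ) (hT₀ : 0 ≤ T₀)
    (t : ℝ) (ht0 : (2 * T₀ + 1) / (2 * n) < t) (ht1 : t < (T₀ + 1) / n) :
    (T₀ - n * t) / (1 + T₀ - n * t) < -1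
    ∧ ∃ z : Fin n → ℂ, z ≠ 0 ∧ ∃ ξ : Fin n → ℂ, ξ ≠ 0 ∧ ∃ r : ℝ, r < 0 ∧
        ((1 + T₀ - n * t : ℝ) : ℂ)
            * ∑ k, ∑ j, ∑ i, ∑ q,
                Rten z ((T₀ - n * t) / (1 + T₀ - n * t)) k j i q
                  * ξ k * conj (ξ j) * ξ i * conj (ξ q)
          = (r : ℂ) := by
  have hn0 : (0:ℝ) < n := by positivity
  have hnt1 : (n:ℝ) * t < T₀ + 1 := by
    have := (lt_div_iff₀ hn0).mp ht1
    linarith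
  have hd : (0:ℝ) < 1 + T₀ - n * t := by linarith
  have ht0' : 2 * T₀ + 1 < 2 * n * t := by
    have h2n : (0:ℝ) < 2 * n := by positivity
    have := (div_lt_iff₀ h2n).mp ht0
    linarith
  have hlam : (T₀ - n * t) / (1 + T₀ - n * t) < -1 := by
    rw [div_lt_iff₀ hd]; linarith
  set i0 : Fin n := ⟨0, by omega⟩ with hi0
  set i1 : Fin n := ⟨1, by omega⟩ with hi1
  have h10 : i1 ≠ i0 := by simp [hi0, hi1, Fin.ext_iff]
  refine ⟨hlam, fun m => if m = i0 then 1 else 0, ?_,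
    fun m => if m = i1 then 1 else 0, ?_, 1 + 2 * T₀ - 2 * n * t, by linarith, ?_⟩
  · intro h
    have := congrFun h i0
    simp at this
  · intro h
    have := congrFun h i1
    simp at this
  · set lam : ℝ := (T₀ - n * t) / (1 + T₀ - n * t) with hlamdef
    set z : Fin n → ℂ := fun m => if m = i0 then 1 else 0 with hz
    have hzsq : zsq z = 1 := by
      simp [zsq, hz, apply_ite Complex.normSq, Finset.sum_ite_eq']
    have hsum : (∑ k, ∑ j, ∑ i, ∑ q,
        Rten z lam k j i q
          * ((fun m => if m = i1 then (1:ℂ) else 0) k)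
          * conj ((fun m => if m = i1 then (1:ℂ) else 0) j)
          * ((fun m => if m = i1 then (1:ℂ) else 0) i)
          * conj ((fun m => if m = i1 then (1:ℂ) else 0) q))
        = Rten z lam i1 i1 i1 i1 := by
      simp [apply_ite (conj : ℂ → ℂ), mul_ite, ite_mul, Finset.sum_ite_eq']
    rw [hsum]
    have hz1 : z i1 = 0 := by simp [hz, h10]
    rw [Rten, hzsq, hz1]
    have hdne : (1 + T₀ - n * t : ℂ) ≠ 0 := by
      exact_mod_cast ne_of_gt hd
    rw [hlamdef]
    push_cast
    field_simp
    simp only [↓reduceIte]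
    ring
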